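/- Multi-source version of the population adaptation bound: let S_1, …, S_M, T be probability measures on X with labeling functions f_1, …, f_M, f_T : X → {0,1}, let α ∈ Δ, and define the mixture risk ε_α(h) = ∑_j α_j ε_{S_j}(h). Then for every h in a hypothesis class H (of {0,1}-valued measurable functions) whose combined-risk infimum λ_α = inf_{h' ∈ H}(ε_α(h') + ε_T(h')) is attained, ε_T(h) ≤ ε_α(h) + (1/2) d_{HΔH}(S_α, T) + λ_α, where S_α = ∑_j α_j S_j. -/
import Mathlib

open MeasureTheory

/-- The HΔH-divergence between two measures. -/
noncomputable def dHDH {X : Type*} [MeasurableSpace X] (H : Set (X → Bool))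
    (D D' : Measure X) : ℝ :=
  2 * sSup ((fun p : (X → Bool) × (X → Bool) =>
      |(D {x | p.1 x ≠ p.2 x}).toReal - (D' {x | p.1 x ≠ p.2 x}).toReal|) ''
    (H ×ˢ H))

lemma tri_aux {X : Type*} [MeasurableSpace X] (μ : Measure X) [IsFiniteMeasure μ]
    (a b c : X → Bool) :
    (μ {x | a x ≠ c x}).toReal ≤ (μ {x | a x ≠ b x}).toReal + (μ {x | b x ≠ c x}).toReal := by
  have hsub : {x | a x ≠ c x} ⊆ {x | a x ≠ b x} ∪ {x | b x ≠ c x} := by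
    intro x hx
    simp only [Set.mem_union, Set.mem_setOf_eq]
    by_contra hc
    push_neg at hc
    exact hx (hc.1.trans hc.2)
  have h1 : μ {x | a x ≠ c x} ≤ μ {x | a x ≠ b x} + μ {x | b x ≠ c x} :=
    (measure_mono hsub).trans (measure_union_le _ _)
  rw [← ENNReal.toReal_add (measure_ne_top _ _) (measure_ne_top _ _)]
  exact ENNReal.toReal_mono (ENNReal.add_ne_top.2 ⟨measure_ne_top _ _, measure_ne_top _ _⟩) h1

theorem multi_source_bound (X : Type*) [MeasurableSpace X] (M : ℕ)
    (S : Fin M → Measure X) (T : Measure X)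
    [∀ j, IsProbabilityMeasure (S j)] [IsProbabilityMeasure T]
    (f : Fin M → X → Bool) (fT : X → Bool)
    (hf : ∀ j, Measurable (f j)) (hfT : Measurable fT)
    (H : Set (X → Bool)) (hHne : H.Nonempty) (hHmeas : ∀ h ∈ H, Measurable h)
    (α : Fin M → ℝ) (hnn : ∀ j, 0 ≤ α j) (hsum : ∑ j, α j = 1)
    (h : X → Bool) (hhH : h ∈ H)
    (hstar : X → Bool) (hstarH : hstar ∈ H)
    (hopt : ∀ h' ∈ H,
      (∑ j, α j * (S j {x | hstar x ≠ f j x}).toReal) + (T {x | hstar x ≠ fT x}).toReal ≤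
        (∑ j, α j * (S j {x | h' x ≠ f j x}).toReal) + (T {x | h' x ≠ fT x}).toReal) :
    (T {x | h x ≠ fT x}).toReal ≤
      (∑ j, α j * (S j {x | h x ≠ f j x}).toReal) +
        (1 / 2) * dHDH H (∑ j, ENNReal.ofReal (α j) • S j) T +
        ((∑ j, α j * (S j {x | hstar x ≠ f j x}).toReal) +
          (T {x | hstar x ≠ fT x}).toReal) := by
  set Sα : Measure X := ∑ j, ENNReal.ofReal (α j) • S j with hSα
  -- Sα applied to any set
  have happ : ∀ s : Set X, (Sα s).toReal = ∑ j, α j * (S j s).toReal := by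
    intro s
    rw [hSα, Measure.finset_sum_apply]
    rw [ENNReal.toReal_sum]
    · refine Finset.sum_congr rfl fun j _ => ?_
      rw [Measure.smul_apply, smul_eq_mul, ENNReal.toReal_mul, ENNReal.toReal_ofReal (hnn j)]
    · intro j _
      rw [Measure.smul_apply, smul_eq_mul]
      exact ENNReal.mul_ne_top ENNReal.ofReal_ne_top (measure_ne_top _ _)
  have hSαle : ∀ s : Set X, (Sα s).toReal ≤ 1 := by
    intro s
    rw [happ]
    calc ∑ j, α j * (S j s).toReal ≤ ∑ j, α j * 1 := by
          refine Finset.sum_le_sum fun j _ => ?_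
          exact mul_le_mul_of_nonneg_left (by
            have := prob_le_one (μ := S j) (s := s)
            exact ENNReal.toReal_le_of_le_ofReal one_pos.le (by simpa using this)) (hnn j)
      _ = 1 := by simp [hsum]
  have hTle : ∀ s : Set X, (T s).toReal ≤ 1 := fun s =>
    ENNReal.toReal_le_of_le_ofReal one_pos.le (by simpa using prob_le_one (μ := T) (s := s))
  have hTnn : ∀ s : Set X, 0 ≤ (T s).toReal := fun s => ENNReal.toReal_nonneg
  -- the sup bound
  have hsup : |(Sα {x | h x ≠ hstar x}).toReal - (T {x | h x ≠ hstar x}).toReal| ≤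
      (1 / 2) * dHDH H Sα T := by
    have hbdd : BddAbove ((fun p : (X → Bool) × (X → Bool) =>
        |(Sα {x | p.1 x ≠ p.2 x}).toReal - (T {x | p.1 x ≠ p.2 x}).toReal|) '' (H ×ˢ H)) := by
      refine ⟨1, fun r hr => ?_⟩
      obtain ⟨p, _, rfl⟩ := hr
      rw [abs_sub_le_iff]
      constructor
      · linarith [hSαle {x | p.1 x ≠ p.2 x}, hTnn {x | p.1 x ≠ p.2 x}]
      · linarith [hTle {x | p.1 x ≠ p.2 x}, ENNReal.toReal_nonneg (a := Sα {x | p.1 x ≠ p.2 x})]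
    have hmem : |(Sα {x | h x ≠ hstar x}).toReal - (T {x | h x ≠ hstar x}).toReal| ∈
        ((fun p : (X → Bool) × (X → Bool) =>
        |(Sα {x | p.1 x ≠ p.2 x}).toReal - (T {x | p.1 x ≠ p.2 x}).toReal|) '' (H ×ˢ H)) :=
      ⟨(h, hstar), ⟨hhH, hstarH⟩, rfl⟩
    have := le_csSup hbdd hmem
    rw [dHDH]
    linarith
  have key : (T {x | h x ≠ hstar x}).toReal ≤
      (Sα {x | h x ≠ hstar x}).toReal + (1 / 2) * dHDH H Sα T := by
    have := abs_sub_le_iff.mp hsup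
    linarith [this.2]
  -- triangle on T
  have t1 : (T {x | h x ≠ fT x}).toReal ≤
      (T {x | h x ≠ hstar x}).toReal + (T {x | hstar x ≠ fT x}).toReal := tri_aux T h hstar fT
  -- bound Sα{h≠h*}
  have t2 : (Sα {x | h x ≠ hstar x}).toReal ≤
      (∑ j, α j * (S j {x | h x ≠ f j x}).toReal) +
      (∑ j, α j * (S j {x | hstar x ≠ f j x}).toReal) := by
    rw [happ, ← Finset.sum_add_distrib]
    refine Finset.sum_le_sum fun j _ => ?_
    rw [← mul_add]
    refine mul_le_mul_of_nonneg_left ?_ (hnn j)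
    have htri := tri_aux (S j) h (f j) hstar
    have heq : {x | f j x ≠ hstar x} = {x | hstar x ≠ f j x} := by
      ext x; simp [ne_comm]
    rw [heq] at htri
    exact htri
  linarith
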